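/- Let $n \ge 1$ be a positive integer and let $a_1, \ldots, a_n$ be real numbers. If a real number $x$ satisfies $x^n \le \sum_{i=1}^{n} a_i x^{n-i}$, then $x \le 2 \max_{1 \le i \le n} |a_i|^{1/i}$. -/

import Mathlib

/-!
If `x > 2M` with `M = max |aᵢ|^{1/i}`, then `|aᵢ| ≤ Mⁱ < (x/2)ⁱ`, so every term
`aᵢ x^{n-i}` is at most `2⁻ⁱ xⁿ`, and the right-hand side is at most
`(1 - 2⁻ⁿ) xⁿ < xⁿ`.
-/

open Finset

lemma sum_Icc_one_half_pow (n : ℕ) : ∑ i ∈ Icc 1 n, (1 / 2 : ℝ) ^ i = 1 - (1 / 2) ^ n := by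
  induction n with
  | zero => simp
  | succ m ih =>
    rw [sum_Icc_succ_top (by omega), ih]
    ring

lemma abs_le_pow_of_rpow_one_div_le {b M : ℝ} {i : ℕ} (hi : i ≠ 0)
    (h : |b| ^ ((1 : ℝ) / i) ≤ M) : |b| ≤ M ^ i := by
  rw [← Real.rpow_inv_natCast_pow (abs_nonneg b) hi, ← one_div]
  exact pow_le_pow_left₀ (by positivity) h i

lemma sum_mul_pow_sub_lt_pow {n : ℕ} {a : ℕ → ℝ} {x : ℝ} (hx : 0 < x)
    (ha : ∀ i ∈ Icc 1 n, |a i| ≤ (x / 2) ^ i) :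
    ∑ i ∈ Icc 1 n, a i * x ^ (n - i) < x ^ n := by
  have hterm : ∀ i ∈ Icc 1 n, a i * x ^ (n - i) ≤ x ^ n * (1 / 2) ^ i := by
    intro i hi
    have hin : i ≤ n := (mem_Icc.mp hi).2
    calc a i * x ^ (n - i) ≤ (x / 2) ^ i * x ^ (n - i) := by
          gcongr
          exact (le_abs_self _).trans (ha i hi)
      _ = x ^ n * (1 / 2) ^ i := by
          rw [← Nat.sub_add_cancel hin, pow_add, Nat.add_sub_cancel, div_pow, one_div, inv_pow]
          ring
  calc ∑ i ∈ Icc 1 n, a i * x ^ (n - i)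
      ≤ ∑ i ∈ Icc 1 n, x ^ n * (1 / 2) ^ i := sum_le_sum hterm
    _ = x ^ n - x ^ n * (1 / 2) ^ n := by rw [← mul_sum, sum_Icc_one_half_pow]; ring
    _ < x ^ n := sub_lt_self _ (by positivity)

theorem root_bound (n : ℕ) (hn : 1 ≤ n) (a : ℕ → ℝ) (x : ℝ)
    (hx : x ^ n ≤ ∑ i ∈ Finset.Icc 1 n, a i * x ^ (n - i)) :
    x ≤ 2 * (Finset.Icc 1 n).sup' (Finset.nonempty_Icc.mpr hn)
      (fun i => |a i| ^ ((1 : ℝ) / (i : ℝ))) := by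
  by_contra! hlt
  set M := (Icc 1 n).sup' (nonempty_Icc.mpr hn) (fun i => |a i| ^ ((1 : ℝ) / (i : ℝ)))
  have hM : ∀ i ∈ Icc 1 n, |a i| ^ ((1 : ℝ) / i) ≤ M := fun i hi =>
    le_sup' (fun i => |a i| ^ ((1 : ℝ) / (i : ℝ))) hi
  have hM0 : 0 ≤ M := (Real.rpow_nonneg (abs_nonneg _) _).trans (hM 1 (by simp [hn]))
  refine hx.not_gt (sum_mul_pow_sub_lt_pow (by linarith) fun i hi => ?_)
  have hi0 : i ≠ 0 := Nat.one_le_iff_ne_zero.mp (mem_Icc.mp hi).1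
  exact (abs_le_pow_of_rpow_one_div_le hi0 (hM i hi)).trans
    (pow_le_pow_left₀ hM0 (by linarith) i)
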